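/- arXiv:2206.09700 — 4 statements merged into one kernel-verified Lean document; each statement's English description precedes it below -/
import Mathlib

section
/- Let F be a finite field of odd characteristic and let n be odd. For any two nondegenerate symmetric bilinear forms f and f' on F^n, there exist a scalar c ∈ F^× and σ ∈ GL_n(F) such that f'(u,v) = c · f(σ⁻¹u, σ⁻¹v) for all u, v ∈ F^n; consequently the orthogonal groups O(F^n, f) and O(F^n, f') are isomorphic as groups. In other words, for odd n there is only one orthogonal group O(n) over F up to isomorphism. -/
/-!
Diagonalize both forms. Over a finite field of odd characteristic any units `a, b` admit
`a x² + b y² = 1`, which makes the binary form `⟨a, b⟩` isometric to `⟨1, a b⟩`; applying this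
repeatedly, a nondegenerate diagonal form `⟨w₁, …, wₙ⟩` is isometric to `⟨1, …, 1, ∏ wᵢ⟩`, so it
is determined up to isometry by its discriminant modulo squares. Scaling by `c` multiplies the
discriminant by `cⁿ`, which for odd `n` is `c` times a square; so `c = disc f' / disc f` makes
`c • f` isometric to `f'`, and conjugation by that isometry identifies the orthogonal groups.
-/

/-- The group of linear automorphisms of `V` preserving the pairing `f`
(the orthogonal group of `f` when `f` is a bilinear form). -/
def orthB {F V : Type*} [Field F] [AddCommGroup V] [Module F V]
    (f : V → V → F) : Subgroup (V ≃ₗ[F] V) where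
  carrier := {g | ∀ u v, f (g u) (g v) = f u v}
  one_mem' := fun _ _ => rfl
  mul_mem' := by
    intro a b ha hb u v
    exact (ha (b u) (b v)).trans (hb u v)
  inv_mem' := by
    intro a ha u v
    have h := ha (a⁻¹ u) (a⁻¹ v)
    simpa [show (a⁻¹ : V ≃ₗ[F] V) = a.symm from rfl] using h.symm

open Finset Polynomial QuadraticMap

theorem FiniteField.exists_mul_sq_add_mul_sq_eq_one {F : Type*} [Field F] [Fintype F]
    (hF : ringChar F ≠ 2) (a b : Fˣ) : ∃ x y : F, a * x ^ 2 + b * y ^ 2 = 1 := by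
  have hf : degree (C (a : F) * X ^ 2 - C 1) = 2 := by
    rw [degree_sub_C] <;> rw [degree_C_mul_X_pow 2 a.ne_zero] <;> norm_num
  obtain ⟨x, y, h⟩ := FiniteField.exists_root_sum_quadratic hf
    (degree_C_mul_X_pow 2 b.ne_zero) (FiniteField.odd_card_of_char_ne_two hF)
  refine ⟨x, y, ?_⟩
  simp only [eval_sub, eval_mul, eval_pow, eval_C, eval_X] at h
  linear_combination h

section PlaneMap

variable {R ι : Type*} [CommRing R] [DecidableEq ι]

def planeMap (i j : ι) (p q r s : R) : (ι → R) →ₗ[R] (ι → R) where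
  toFun v := Function.update (Function.update v i (p * v i + q * v j)) j (r * v i + s * v j)
  map_add' u v := by
    ext k
    simp only [Function.update_apply, Pi.add_apply]
    split_ifs <;> ring
  map_smul' c v := by
    ext k
    simp only [Function.update_apply, Pi.smul_apply, smul_eq_mul, RingHom.id_apply]
    split_ifs <;> ring

lemma planeMap_apply_left {i j : ι} (hij : i ≠ j) (p q r s : R) (v : ι → R) :
    planeMap i j p q r s v i = p * v i + q * v j := by
  simp [planeMap, hij]

lemma planeMap_apply_right (i j : ι) (p q r s : R) (v : ι → R) :
    planeMap i j p q r s v j = r * v i + s * v j := by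
  simp [planeMap]

lemma planeMap_apply_of_ne {i j k : ι} (hi : k ≠ i) (hj : k ≠ j) (p q r s : R) (v : ι → R) :
    planeMap i j p q r s v k = v k := by
  simp [planeMap, hi, hj]

lemma planeMap_planeMap {i j : ι} (hij : i ≠ j) (p q r s p' q' r' s' : R) (v : ι → R) :
    planeMap i j p q r s (planeMap i j p' q' r' s' v) =
      planeMap i j (p * p' + q * r') (p * q' + q * s') (r * p' + s * r') (r * q' + s * s') v := by
  ext k
  by_cases hi : k = i
  · simp only [hi, planeMap_apply_left hij, planeMap_apply_right]; ring
  by_cases hj : k = j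
  · simp only [hj, planeMap_apply_left hij, planeMap_apply_right]; ring
  simp only [planeMap_apply_of_ne hi hj]

lemma planeMap_one (i j : ι) (v : ι → R) : planeMap i j 1 0 0 1 v = v := by
  ext k
  simp [planeMap]

lemma planeMap_comp_planeMap_eq_id {i j : ι} (hij : i ≠ j) {p q r s p' q' r' s' : R}
    (h₁ : p * p' + q * r' = 1) (h₂ : p * q' + q * s' = 0) (h₃ : r * p' + s * r' = 0)
    (h₄ : r * q' + s * s' = 1) :
    (planeMap i j p q r s).comp (planeMap i j p' q' r' s') = LinearMap.id :=
  LinearMap.ext fun v => by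
    rw [LinearMap.comp_apply, planeMap_planeMap hij, h₁, h₂, h₃, h₄, planeMap_one]
    rfl

lemma sum_planeMap [Fintype ι] {M : Type*} [AddCommMonoid M] {i j : ι} (hij : i ≠ j)
    (g : ι → R → M) (p q r s : R) (v : ι → R) :
    ∑ k, g k (planeMap i j p q r s v k) =
      g i (p * v i + q * v j) + g j (r * v i + s * v j) + ∑ k ∈ {i, j}ᶜ, g k (v k) := by
  rw [← sum_add_sum_compl {i, j}, sum_pair hij, planeMap_apply_left hij, planeMap_apply_right]
  congr 1
  refine sum_congr rfl fun k hk => ?_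
  simp only [mem_compl, mem_insert, mem_singleton, not_or] at hk
  rw [planeMap_apply_of_ne hk.1 hk.2]

end PlaneMap

namespace QuadraticForm

variable {F ι : Type*} [Field F] [Fintype ι]

lemma smul_weightedSumSquares (c : Fˣ) (w : ι → Fˣ) :
    (c : F) • weightedSumSquares F w = weightedSumSquares F (c • w) := by
  ext v
  simp [mul_sum, Units.smul_def, mul_assoc]

variable [DecidableEq ι]

theorem equivalent_weightedSumSquares_update_update (w : ι → Fˣ) {i j : ι} (hij : i ≠ j)
    {x y : F} (hxy : w i * x ^ 2 + w j * y ^ 2 = 1) :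
    (weightedSumSquares F w).Equivalent
      (weightedSumSquares F (Function.update (Function.update w i 1) j (w i * w j))) := by
  set a : F := (w i : F)
  set b : F := (w j : F)
  -- `!![a x, b y; -y, x]` has determinant `a x² + b y² = 1` and carries `a X² + b Y²` to
  -- `X² + a b Y²`; its inverse is its adjugate.
  let e : (ι → F) ≃ₗ[F] (ι → F) := .ofLinearMap (planeMap i j (a * x) (b * y) (-y) x)
    (planeMap i j x (-(b * y)) y (a * x))
    (planeMap_comp_planeMap_eq_id hij (by linear_combination hxy) (by ring) (by ring)
      (by linear_combination hxy))
    (planeMap_comp_planeMap_eq_id hij (by linear_combination hxy) (by ring) (by ring)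
      (by linear_combination hxy))
  refine ⟨⟨e, fun v => ?_⟩⟩
  have hw : ∀ k ∈ ({i, j} : Finset ι)ᶜ,
      Function.update (Function.update w i 1) j (w i * w j) k = w k := by
    intro k hk
    simp only [mem_compl, mem_insert, mem_singleton, not_or] at hk
    rw [Function.update_of_ne hk.2, Function.update_of_ne hk.1]
  change weightedSumSquares F _ (planeMap i j (a * x) (b * y) (-y) x v) = weightedSumSquares F w v
  simp only [weightedSumSquares_apply]
  rw [sum_planeMap hij (fun k t => _ • (t * t)), ← sum_add_sum_compl {i, j}, sum_pair hij,
    sum_congr rfl fun k hk => by rw [hw k hk]]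
  simp only [Function.update_self, Function.update_of_ne hij, Units.smul_def, Units.val_one,
    Units.val_mul, smul_eq_mul]
  linear_combination (v i * v i * a + v j * v j * b) * hxy

variable [Fintype F]

theorem equivalent_weightedSumSquares_update_piecewise (hF : ringChar F ≠ 2) (w : ι → Fˣ)
    {ℓ : ι} {s : Finset ι} (hℓ : ℓ ∉ s) :
    (weightedSumSquares F w).Equivalent
      (weightedSumSquares F (Function.update (s.piecewise 1 w) ℓ (w ℓ * ∏ k ∈ s, w k))) := by
  induction s using Finset.induction_on with
  | empty => simp [Equivalent.refl]
  | insert a s ha ih =>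
    rw [mem_insert, not_or] at hℓ
    set v : ι → Fˣ := Function.update (s.piecewise 1 w) ℓ (w ℓ * ∏ k ∈ s, w k)
    have hva : v a = w a := by simp [v, Function.update_of_ne (Ne.symm hℓ.1), ha]
    have hvℓ : v ℓ = w ℓ * ∏ k ∈ s, w k := by simp [v]
    obtain ⟨x, y, hxy⟩ := FiniteField.exists_mul_sq_add_mul_sq_eq_one hF (v a) (v ℓ)
    refine (ih hℓ.2).trans ?_
    convert equivalent_weightedSumSquares_update_update v (Ne.symm hℓ.1) hxy using 2
    rw [hva, hvℓ, Function.update_comm hℓ.1, Function.update_idem, prod_insert ha,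
      piecewise_insert, Pi.one_apply, mul_left_comm]

theorem equivalent_weightedSumSquares_mulSingle_prod (hF : ringChar F ≠ 2) (w : ι → Fˣ)
    (ℓ : ι) :
    (weightedSumSquares F w).Equivalent (weightedSumSquares F (Pi.mulSingle ℓ (∏ k, w k))) := by
  convert equivalent_weightedSumSquares_update_piecewise hF w (notMem_erase ℓ univ) using 2
  rw [mul_prod_erase _ _ (mem_univ ℓ)]
  ext1 k
  by_cases hk : k = ℓ <;> simp [hk]

theorem equivalent_weightedSumSquares_of_prod_eq_mul_sq [Nonempty ι] (hF : ringChar F ≠ 2)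
    {w w' : ι → Fˣ} {t : Fˣ} (h : ∏ k, w' k = (∏ k, w k) * t ^ 2) :
    (weightedSumSquares F w).Equivalent (weightedSumSquares F w') := by
  let ℓ := Classical.arbitrary ι
  refine (equivalent_weightedSumSquares_mulSingle_prod hF w ℓ).trans
    (.trans ?_ (equivalent_weightedSumSquares_mulSingle_prod hF w' ℓ).symm)
  refine ⟨(isometryEquivWeightedSumSquaresWeightedSumSquares
    (Pi.mulSingle ℓ (toUnits t)) fun k => ?_).symm⟩
  by_cases hk : k = ℓ
  · subst hk; simp [h]
  · simp [hk]

theorem exists_smul_weightedSumSquares_equivalent (hF : ringChar F ≠ 2)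
    (hι : Odd (Fintype.card ι)) (w w' : ι → Fˣ) :
    ∃ c : Fˣ, ((c : F) • weightedSumSquares F w).Equivalent (weightedSumSquares F w') := by
  obtain ⟨m, hm⟩ := hι
  have : Nonempty ι := Fintype.card_pos_iff.mp (by omega)
  let c : Fˣ := (∏ k, w' k) / ∏ k, w k
  refine ⟨c, smul_weightedSumSquares c w ▸
    equivalent_weightedSumSquares_of_prod_eq_mul_sq hF (t := (c ^ m)⁻¹) ?_⟩
  have hc : c ^ (2 * m + 1) * ((c ^ m)⁻¹) ^ 2 = c := by group
  simp only [Pi.smul_apply, smul_eq_mul, prod_mul_distrib, prod_const, card_univ, hm]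
  rw [mul_right_comm, hc, div_mul_cancel]

end QuadraticForm

theorem QuadraticMap.Equivalent.smul {R M₁ M₂ : Type*} [CommRing R] [AddCommGroup M₁]
    [AddCommGroup M₂] [Module R M₁] [Module R M₂] {Q₁ : QuadraticForm R M₁}
    {Q₂ : QuadraticForm R M₂} (h : Q₁.Equivalent Q₂) (c : R) : (c • Q₁).Equivalent (c • Q₂) :=
  let ⟨e⟩ := h
  ⟨⟨e.toLinearEquiv, fun x => by simp [e.map_app]⟩⟩

namespace LinearMap.BilinForm

theorem equivalent_of_toQuadraticMap_equivalent {R M₁ M₂ : Type*} [CommRing R]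
    [Invertible (2 : R)] [AddCommGroup M₁] [AddCommGroup M₂] [Module R M₁] [Module R M₂]
    {B₁ : LinearMap.BilinForm R M₁} {B₂ : LinearMap.BilinForm R M₂}
    (h₁ : ∀ x y, B₁ x y = B₁ y x) (h₂ : ∀ x y, B₂ x y = B₂ y x)
    (h : B₁.toQuadraticMap.Equivalent B₂.toQuadraticMap) : B₁.Equivalent B₂ := by
  obtain ⟨e⟩ := h
  have hcomp : B₂.toQuadraticMap.comp (e : M₁ →ₗ[R] M₂) = B₁.toQuadraticMap :=
    QuadraticMap.ext e.map_app
  refine ⟨⟨e.toLinearEquiv, fun x y => ?_⟩⟩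
  have := congr($(congrArg (associated (R := R)) hcomp) x y)
  rwa [associated_comp, associated_left_inverse R h₂, associated_left_inverse R h₁] at this

theorem exists_toQuadraticMap_equivalent_weightedSumSquares {K V : Type*} [Field K]
    [Invertible (2 : K)] [AddCommGroup V] [Module K V] [FiniteDimensional K V]
    {B : LinearMap.BilinForm K V} (hB : ∀ x y, B x y = B y x) (hnd : B.SeparatingRight) :
    ∃ w : Fin (Module.finrank K V) → Kˣ,
      B.toQuadraticMap.Equivalent (weightedSumSquares K w) := by
  apply QuadraticForm.equivalent_weightedSumSquares_units_of_nondegenerate'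
  rw [associated_left_inverse K hB]
  exact fun x hx => hnd x fun y => (hB y x).trans (hx y)

end LinearMap.BilinForm

theorem map_conj_orthB {F V : Type*} [Field F] [AddCommGroup V] [Module F V]
    {f f' : V → V → F} {c : F} (hc : c ≠ 0) (σ : V ≃ₗ[F] V)
    (hσ : ∀ u v, f' u v = c * f (σ.symm u) (σ.symm v)) :
    (orthB f).map (MulAut.conj σ).toMonoidHom = orthB f' := by
  ext g
  have hconj : ∀ v, ((MulAut.conj σ).symm g) v = σ.symm (g (σ v)) := fun _ => rfl
  rw [Subgroup.mem_map_equiv]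
  change (∀ u v, f _ _ = f u v) ↔ ∀ u v, f' (g u) (g v) = f' u v
  simp only [hconj, hσ, mul_right_inj' hc]
  constructor
  · intro h u v
    simpa using h (σ.symm u) (σ.symm v)
  · intro h u v
    simpa using h (σ u) (σ v)

/-- Over a finite field of odd characteristic and for odd `n`, any two
nondegenerate symmetric bilinear forms on `F^n` differ by a scalar and a change of
basis, and their orthogonal groups are isomorphic. -/
theorem odd_dim_unique_orthogonal_group
    (F : Type*) [Field F] [Fintype F] (hodd : Odd (ringChar F))
    (n : ℕ) (hn : Odd n)
    (f f' : LinearMap.BilinForm F (Fin n → F))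
    (hsymm : ∀ u v, f u v = f v u) (hsymm' : ∀ u v, f' u v = f' v u)
    (hnd : ∀ v, (∀ u, f u v = 0) → v = 0)
    (hnd' : ∀ v, (∀ u, f' u v = 0) → v = 0) :
    (∃ (c : F) (σ : (Fin n → F) ≃ₗ[F] (Fin n → F)), c ≠ 0 ∧
        ∀ u v, f' u v = c * f (σ.symm u) (σ.symm v))
    ∧ Nonempty ((orthB fun u v => f u v) ≃* (orthB fun u v => f' u v)) := by
  have hF : ringChar F ≠ 2 := fun h => by rw [h] at hodd; exact (by decide : ¬Odd 2) hodd
  let : Invertible (2 : F) := invertibleOfNonzero (Ring.two_ne_zero hF)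
  obtain ⟨w, hw⟩ :=
    LinearMap.BilinForm.exists_toQuadraticMap_equivalent_weightedSumSquares hsymm hnd
  obtain ⟨w', hw'⟩ :=
    LinearMap.BilinForm.exists_toQuadraticMap_equivalent_weightedSumSquares hsymm' hnd'
  obtain ⟨c, hc⟩ := QuadraticForm.exists_smul_weightedSumSquares_equivalent hF
    (by simpa [Module.finrank_fin_fun] using hn) w w'
  have hQ : ((c : F) • f).toQuadraticMap.Equivalent f'.toQuadraticMap := by
    rw [LinearMap.BilinMap.toQuadraticMap_smul]
    exact (hw.smul _).trans (hc.trans hw'.symm)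
  obtain ⟨e⟩ := LinearMap.BilinForm.equivalent_of_toQuadraticMap_equivalent
    (fun u v => by simp [hsymm u v]) hsymm' hQ
  set σ := e.toLinearEquiv
  have hσ : ∀ u v, f' u v = c * f (σ.symm u) (σ.symm v) := fun u v => by
    have h := e.map_app (σ.symm v) (σ.symm u)
    rwa [← e.coe_toLinearEquiv, σ.apply_symm_apply, σ.apply_symm_apply] at h
  exact ⟨⟨c, σ, c.ne_zero, hσ⟩, ⟨(MulEquiv.subgroupMap (MulAut.conj σ) _).trans
    (MulEquiv.subgroupCongr (map_conj_orthB c.ne_zero σ hσ))⟩⟩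
end

section
/- Let F be a finite field of characteristic 2 and Q a nonsingular, degenerate quadratic form on a finite-dimensional F-vector space V, with radical R := rad(f_Q) ≠ 0. Then: (i) every g ∈ O(V, Q) fixes R pointwise; (ii) the polar form f_Q descends to a well-defined symplectic (alternating nondegenerate) bilinear form f' on the quotient V/R; and (iii) the map sending g ∈ O(V,Q) to the induced automorphism of V/R is a group isomorphism O(V, Q) ≅ Sp(V/R, f') onto the full symplectic group of f'. -/
/-- The group of linear automorphisms of `V` preserving the form `Q`
(the orthogonal group of `Q` when `Q` is a quadratic form). -/
def orthQ {F V : Type*} [Field F] [AddCommGroup V] [Module F V]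
    (Q : V → F) : Subgroup (V ≃ₗ[F] V) where
  carrier := {g | ∀ v, Q (g v) = Q v}
  one_mem' := fun _ => rfl
  mul_mem' := by
    intro a b ha hb v
    exact (ha (b v)).trans (hb v)
  inv_mem' := by
    intro a ha v
    have h := ha (a⁻¹ v)
    simpa [show (a⁻¹ : V ≃ₗ[F] V) = a.symm from rfl] using h.symm

lemma mem_orthQ {F V : Type*} [Field F] [AddCommGroup V] [Module F V]
    (Q : V → F) (g : V ≃ₗ[F] V) : g ∈ orthQ Q ↔ ∀ v, Q (g v) = Q v := Iff.rfl

lemma mem_orthB {F V : Type*} [Field F] [AddCommGroup V] [Module F V]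
    (f : V → V → F) (g : V ≃ₗ[F] V) : g ∈ orthB f ↔ ∀ u v, f (g u) (g v) = f u v := Iff.rfl

/-- For a nonsingular degenerate quadratic form `Q` in
characteristic 2 with polar radical `R`: (i) every element of `O(V, Q)` fixes `R`
pointwise; (ii) the polar form descends to a symplectic form `f'` on `V/R`; and
(iii) `g ↦ (induced map on V/R)` is a group isomorphism `O(V, Q) ≅ Sp(V/R, f')`. -/
theorem orthogonal_group_iso_symplectic_of_degenerate
    (F : Type*) [Field F] [Fintype F] [CharP F 2]
    (V : Type*) [AddCommGroup V] [Module F V] [FiniteDimensional F V]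
    (Q : QuadraticForm F V)
    (R : Submodule F V) (hR : R = LinearMap.ker Q.polarBilin.flip)
    (hdeg : R ≠ ⊥)
    (hns : ∀ v ∈ R, Q v = 0 → v = 0) :
    (∀ g ∈ orthQ (fun v => Q v), ∀ v ∈ R, g v = v)
    ∧ ∃ f' : LinearMap.BilinForm F (V ⧸ R),
        (∀ u v : V, f' (R.mkQ u) (R.mkQ v) = QuadraticMap.polar Q u v)
        ∧ (∀ x, f' x x = 0)
        ∧ (∀ x, (∀ y, f' y x = 0) → x = 0)
        ∧ ∃ φ : (orthQ fun v => Q v) ≃* (orthB fun x y => f' x y),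
            ∀ (g : (orthQ fun v => Q v)) (v : V),
              ((φ g : (V ⧸ R) ≃ₗ[F] (V ⧸ R)) (R.mkQ v)) =
                R.mkQ ((g : V ≃ₗ[F] V) v) := by
  classical
  -- characterization of membership in R
  have memR : ∀ v : V, v ∈ R ↔ ∀ u, QuadraticMap.polar Q u v = 0 := by
    intro v
    rw [hR, LinearMap.mem_ker]
    constructor
    · intro h u
      have := congrArg (fun φ : V →ₗ[F] F => φ u) h
      simpa [QuadraticMap.polarBilin_apply_apply] using this
    · intro h
      ext u
      simpa [QuadraticMap.polarBilin_apply_apply] using h u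
  have memR' : ∀ v ∈ R, ∀ u, QuadraticMap.polar Q v u = 0 := by
    intro v hv u
    rw [QuadraticMap.polar_comm]
    exact (memR v).mp hv u
  have hQadd : ∀ u v : V, Q (u + v) = Q u + Q v + QuadraticMap.polar Q u v := by
    intro u v; simp [QuadraticMap.polar]
  have char2 : ∀ x : F, x + x = 0 := fun x => by
    have h2 : (2 : F) = 0 := CharTwo.two_eq_zero
    calc x + x = 2 * x := by ring
    _ = 0 := by rw [h2, zero_mul]
  -- orthogonal maps preserve the polar form
  have hpol : ∀ g ∈ orthQ (fun v => Q v), ∀ u v : V,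
      QuadraticMap.polar Q (g u) (g v) = QuadraticMap.polar Q u v := by
    intro g hg u v
    have h1 := hg (u + v)
    have h2 := hg u
    have h3 := hg v
    simp only [map_add] at h1
    simp only [QuadraticMap.polar, h1, h2, h3]
  -- Part (i): orthogonal maps fix R pointwise
  have hfix : ∀ g ∈ orthQ (fun v => Q v), ∀ v ∈ R, g v = v := by
    intro g hg v hv
    have hg' : ∀ u : V, Q (g u) = Q u := hg
    have hgvR : g v ∈ R := by
      rw [memR]
      intro u
      have := hpol g hg (g.symm u) v
      rw [g.apply_symm_apply] at this
      rw [this]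
      exact (memR v).mp hv _
    have hsub : g v - v ∈ R := sub_mem hgvR hv
    have hQ0 : Q (g v - v) = 0 := by
      have : Q (g v - v) = Q (g v + -v) := by rw [sub_eq_add_neg]
      rw [this, hQadd, memR' (g v) hgvR (-v)]
      have hneg : Q (-v) = Q v := by simp
      rw [hneg, hg' v, add_zero]
      exact char2 _
    have := hns _ hsub hQ0
    exact sub_eq_zero.mp this
  refine ⟨hfix, ?_⟩
  -- Part (ii): construct f'
  have h1 : R ≤ LinearMap.ker (Q.polarBilin : V →ₗ[F] V →ₗ[F] F) := by
    intro r hr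
    rw [LinearMap.mem_ker]
    ext u
    simpa [QuadraticMap.polarBilin_apply_apply] using memR' r hr u
  set B1 : (V ⧸ R) →ₗ[F] V →ₗ[F] F := R.liftQ (Q.polarBilin : V →ₗ[F] V →ₗ[F] F) h1 with hB1
  have h2 : R ≤ LinearMap.ker B1.flip := by
    intro r hr
    rw [LinearMap.mem_ker]
    apply LinearMap.ext
    intro x
    obtain ⟨u, rfl⟩ := R.mkQ_surjective x
    simp only [LinearMap.flip_apply, hB1, Submodule.liftQ_apply, Submodule.mkQ_apply,
      LinearMap.zero_apply]
    simpa [QuadraticMap.polarBilin_apply_apply] using (memR r).mp hr u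
  set f' : LinearMap.BilinForm F (V ⧸ R) := R.liftQ B1.flip h2 with hf'
  have hf'apply : ∀ u v : V, f' (R.mkQ u) (R.mkQ v) = QuadraticMap.polar Q u v := by
    intro u v
    simp only [hf', hB1, Submodule.mkQ_apply, Submodule.liftQ_apply, LinearMap.flip_apply,
      QuadraticMap.polarBilin_apply_apply]
    exact QuadraticMap.polar_comm _ _ _
  refine ⟨f', hf'apply, ?_, ?_, ?_⟩
  · -- alternating
    intro x
    obtain ⟨u, rfl⟩ := R.mkQ_surjective x
    rw [hf'apply]
    rw [QuadraticMap.polar_self, two_smul]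
    exact char2 _
  · -- nondegenerate
    intro x h
    obtain ⟨v, rfl⟩ := R.mkQ_surjective x
    have : v ∈ R := by
      rw [memR]
      intro u
      have := h (R.mkQ u)
      rwa [hf'apply] at this
    simpa [Submodule.Quotient.mk_eq_zero] using this
  · -- Part (iii)
    -- every g in orthQ maps R to itself
    have hmap : ∀ g : (orthQ fun v => Q v), R.map ((g : V ≃ₗ[F] V) : V →ₗ[F] V) = R := by
      intro g
      apply le_antisymm
      · rintro x ⟨v, hv, rfl⟩
        simpa [hfix (g : V ≃ₗ[F] V) g.2 v hv] using hv
      · intro v hv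
        exact ⟨v, hv, hfix (g : V ≃ₗ[F] V) g.2 v hv⟩
    -- the induced equivalence on the quotient
    let E : (orthQ fun v => Q v) → ((V ⧸ R) ≃ₗ[F] (V ⧸ R)) := fun g =>
      Submodule.Quotient.equiv R R (g : V ≃ₗ[F] V) (hmap g)
    have hEapply : ∀ (g : (orthQ fun v => Q v)) (v : V),
        E g (R.mkQ v) = R.mkQ ((g : V ≃ₗ[F] V) v) := by
      intro g v
      simp [E, Submodule.Quotient.equiv, Submodule.mapQ_apply]
    have hEmem : ∀ g : (orthQ fun v => Q v), E g ∈ orthB (fun x y => f' x y) := by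
      intro g
      rw [mem_orthB]
      intro x y
      obtain ⟨u, rfl⟩ := R.mkQ_surjective x
      obtain ⟨v, rfl⟩ := R.mkQ_surjective y
      rw [hEapply, hEapply, hf'apply, hf'apply]
      exact hpol (g : V ≃ₗ[F] V) g.2 u v
    let Φ : (orthQ fun v => Q v) →* (orthB fun x y => f' x y) :=
      { toFun := fun g => ⟨E g, hEmem g⟩
        map_one' := by
          apply Subtype.ext
          apply LinearEquiv.toLinearMap_injective
          apply Submodule.linearMap_qext
          ext v
          simpa using hEapply 1 v
        map_mul' := by
          intro a b
          apply Subtype.ext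
          apply LinearEquiv.toLinearMap_injective
          apply Submodule.linearMap_qext
          ext v
          simp only [LinearMap.coe_comp, Function.comp_apply, Submodule.mkQ_apply,
            LinearEquiv.coe_coe]
          have h1 : ((⟨E (a*b), hEmem (a*b)⟩ : (orthB fun x y => f' x y)) : (V ⧸ R) ≃ₗ[F] (V ⧸ R)) (R.mkQ v) = R.mkQ (((a*b : (orthQ fun v => Q v)) : V ≃ₗ[F] V) v) := hEapply (a*b) v
          show E (a * b) (R.mkQ v) = (E a * E b) (R.mkQ v)
          rw [hEapply (a*b) v]
          have : (E a * E b) (R.mkQ v) = E a (E b (R.mkQ v)) := rfl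
          rw [this, hEapply b v, hEapply a _]
          rfl }
    have hΦinj : Function.Injective Φ := by
      rw [injective_iff_map_eq_one]
      intro g hg
      have hgv : ∀ v : V, (g : V ≃ₗ[F] V) v = v := by
        intro v
        have h1 : E g (R.mkQ v) = R.mkQ v := by
          have := congrArg (fun s : (orthB fun x y => f' x y) => (s : (V ⧸ R) ≃ₗ[F] (V ⧸ R)) (R.mkQ v)) hg
          simpa [Φ] using this
        rw [hEapply] at h1
        have hsub : (g : V ≃ₗ[F] V) v - v ∈ R := (Submodule.Quotient.eq R).mp h1
        have hQ0 : Q ((g : V ≃ₗ[F] V) v - v) = 0 := by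
          have hexp : Q ((g : V ≃ₗ[F] V) v)
              = Q v + Q ((g : V ≃ₗ[F] V) v - v)
                + QuadraticMap.polar Q v ((g : V ≃ₗ[F] V) v - v) := by
            rw [← hQadd]; congr 1; abel
          have hQg : Q ((g : V ≃ₗ[F] V) v) = Q v := g.2 v
          rw [hQg, (memR _).mp hsub v, add_zero] at hexp
          have : Q v + 0 = Q v + Q ((g : V ≃ₗ[F] V) v - v) := by
            rw [add_zero]; exact hexp
          exact (add_left_cancel this).symm
        have := hns _ hsub hQ0
        exact sub_eq_zero.mp this
      apply Subtype.ext
      apply LinearEquiv.toLinearMap_injective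
      apply LinearMap.ext
      intro v
      exact hgv v
    have hΦsurj : Function.Surjective Φ := by
      intro s
      -- set up square roots
      haveI : ExpChar F 2 := .prime Nat.prime_two
      haveI : PerfectRing F 2 := inferInstance
      set ρ : F ≃+* F := (frobeniusEquiv F 2).symm with hρ
      have hρsq : ∀ x : F, ρ x * ρ x = x := by
        intro x
        have h := (frobeniusEquiv F 2).apply_symm_apply x
        rw [frobeniusEquiv_def] at h
        calc ρ x * ρ x = (ρ x) ^ 2 := by ring
        _ = x := h
      have hρsmul : ∀ a x : F, ρ (a * a * x) = a * ρ x := by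
        intro a x
        have ha : a * a = frobeniusEquiv F 2 a := by rw [frobeniusEquiv_def]; ring
        rw [ha, map_mul, RingEquiv.symm_apply_apply]
      -- pick v₀ ∈ R nonzero
      obtain ⟨v₀, hv₀R, hv₀ne⟩ := Submodule.exists_mem_ne_zero_of_ne_bot hdeg
      have hQv₀ : Q v₀ ≠ 0 := fun h => hv₀ne (hns v₀ hv₀R h)
      -- section of mkQ
      obtain ⟨σ, hσ⟩ := R.mkQ.exists_rightInverse_of_surjective (by rw [Submodule.range_mkQ])
      have hσap : ∀ x : V ⧸ R, R.mkQ (σ x) = x := by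
        intro x
        have := LinearMap.ext_iff.mp hσ x
        simpa using this
      set sE : (V ⧸ R) ≃ₗ[F] (V ⧸ R) := (s : (V ⧸ R) ≃ₗ[F] (V ⧸ R)) with hsE
      have hs : ∀ x y : V ⧸ R, f' (sE x) (sE y) = f' x y := s.2
      -- the defect function
      set d : V → F := fun v => Q v - Q (σ (sE (R.mkQ v))) with hd
      have hdadd : ∀ u v : V, d (u + v) = d u + d v := by
        intro u v
        have e1 : Q (u + v) = Q u + Q v + QuadraticMap.polar Q u v := hQadd u v
        have e2 : σ (sE (R.mkQ (u + v))) = σ (sE (R.mkQ u)) + σ (sE (R.mkQ v)) := by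
          simp [map_add]
        have e3 : Q (σ (sE (R.mkQ (u + v)))) =
            Q (σ (sE (R.mkQ u))) + Q (σ (sE (R.mkQ v)))
              + QuadraticMap.polar Q (σ (sE (R.mkQ u))) (σ (sE (R.mkQ v))) := by
          rw [e2]; exact hQadd _ _
        have e4 : QuadraticMap.polar Q (σ (sE (R.mkQ u))) (σ (sE (R.mkQ v)))
            = QuadraticMap.polar Q u v := by
          rw [← hf'apply, hσap, hσap, hs, hf'apply]
        simp only [hd]
        rw [e1, e3, e4]
        ring
      have hdsmul : ∀ (a : F) (v : V), d (a • v) = a * a * d v := by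
        intro a v
        have e1 : Q (a • v) = a * a * Q v := by
          rw [QuadraticMap.map_smul, smul_eq_mul]
        have e2 : σ (sE (R.mkQ (a • v))) = a • σ (sE (R.mkQ v)) := by
          simp [map_smul]
        have e3 : Q (σ (sE (R.mkQ (a • v)))) = a * a * Q (σ (sE (R.mkQ v))) := by
          rw [e2, QuadraticMap.map_smul, smul_eq_mul]
        simp only [hd]
        rw [e1, e3]
        ring
      -- the correction linear functional
      set c : V →ₗ[F] F :=
        { toFun := fun v => ρ (d v * (Q v₀)⁻¹)
          map_add' := by
            intro u v
            show ρ (d (u + v) * (Q v₀)⁻¹) = ρ (d u * (Q v₀)⁻¹) + ρ (d v * (Q v₀)⁻¹)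
            rw [hdadd, add_mul, map_add]
          map_smul' := by
            intro a v
            show ρ (d (a • v) * (Q v₀)⁻¹) = a • ρ (d v * (Q v₀)⁻¹)
            rw [hdsmul, smul_eq_mul]
            have harg : a * a * d v * (Q v₀)⁻¹ = a * a * (d v * (Q v₀)⁻¹) := by ring
            rw [harg]
            exact hρsmul _ _ } with hc
      have hcsq : ∀ v : V, c v * c v * Q v₀ = d v := by
        intro v
        have : c v * c v = d v * (Q v₀)⁻¹ := hρsq _
        rw [this]
        field_simp
      -- the lift
      set g₀ : V →ₗ[F] V :=
        ((σ ∘ₗ (sE : (V ⧸ R) →ₗ[F] (V ⧸ R))) ∘ₗ R.mkQ) + (LinearMap.toSpanSingleton F V v₀) ∘ₗ c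
        with hg₀
      have hg₀ap : ∀ v : V, g₀ v = σ (sE (R.mkQ v)) + c v • v₀ := by
        intro v
        simp [hg₀, LinearMap.toSpanSingleton_apply]
      have hmkg₀ : ∀ v : V, R.mkQ (g₀ v) = sE (R.mkQ v) := by
        intro v
        rw [hg₀ap, map_add, hσap]
        have : R.mkQ (c v • v₀) = 0 := by
          rw [Submodule.mkQ_apply, Submodule.Quotient.mk_eq_zero]
          exact Submodule.smul_mem _ _ hv₀R
        rw [this, add_zero]
      have hQg₀ : ∀ v : V, Q (g₀ v) = Q v := by
        intro v
        rw [hg₀ap, hQadd]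
        have hc0 : QuadraticMap.polar Q (σ (sE (R.mkQ v))) (c v • v₀) = 0 :=
          (memR _).mp (Submodule.smul_mem _ _ hv₀R) _
        have hQc : Q (c v • v₀) = d v := by
          rw [QuadraticMap.map_smul, smul_eq_mul, ← hcsq v]
        rw [hc0, hQc, add_zero]
        simp only [hd]
        ring
      have hg₀inj : Function.Injective g₀ := by
        rw [← LinearMap.ker_eq_bot]
        apply (Submodule.eq_bot_iff _).mpr
        intro v hv
        rw [LinearMap.mem_ker] at hv
        have h1 : sE (R.mkQ v) = 0 := by
          rw [← hmkg₀, hv, map_zero]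
        have h2 : R.mkQ v = 0 := sE.map_eq_zero_iff.mp h1
        have h3 : v ∈ R := by
          rwa [Submodule.mkQ_apply, Submodule.Quotient.mk_eq_zero] at h2
        have h4 : Q v = 0 := by
          rw [← hQg₀ v, hv, map_zero]
        exact hns v h3 h4
      have hg₀surj : Function.Surjective g₀ := LinearMap.injective_iff_surjective.mp hg₀inj
      set g : V ≃ₗ[F] V := LinearEquiv.ofBijective g₀ ⟨hg₀inj, hg₀surj⟩ with hg
      have hgap : ∀ v : V, g v = g₀ v := fun _ => rfl
      have hgmem : g ∈ orthQ (fun v => Q v) := by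
        rw [mem_orthQ]
        intro v
        rw [hgap]
        exact hQg₀ v
      refine ⟨⟨g, hgmem⟩, ?_⟩
      apply Subtype.ext
      apply LinearEquiv.toLinearMap_injective
      apply Submodule.linearMap_qext
      ext v
      simp only [LinearMap.coe_comp, Function.comp_apply, Submodule.mkQ_apply,
        LinearEquiv.coe_coe]
      show E ⟨g, hgmem⟩ (R.mkQ v) = sE (R.mkQ v)
      rw [hEapply, hgap]
      exact hmkg₀ v
    -- assemble the MulEquiv
    refine ⟨MulEquiv.ofBijective Φ ⟨hΦinj, hΦsurj⟩, ?_⟩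
    intro g v
    show ((Φ g : (orthB fun x y => f' x y)) : (V ⧸ R) ≃ₗ[F] (V ⧸ R)) (R.mkQ v)
        = R.mkQ ((g : V ≃ₗ[F] V) v)
    exact hEapply g v
end

section
/- Let F be a field of characteristic different from 2, V a finite-dimensional F-vector space, f a nondegenerate symmetric bilinear form on V, and g ∈ O(V, f). Then det(g) = (−1)^{rank(Id_V − g)}; that is, the determinant of an orthogonal transformation equals (−1) raised to the Dickson invariant D(g) = rank(Id − g) mod 2, so in characteristic different from 2 the determinant is equivalent to the Dickson invariant. -/
/-! Write `h = 1 - g` and `W = range h`. Since `g` is an isometry, `f (h x) (g y) = -f x (h y)`;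
in particular every vector of `W` is orthogonal to `ker h`, so `χ (h x) (h y) = f (h x) y` is a
well-defined bilinear form on `W` (Wall's form), nondegenerate because `f` is. By symmetry of `f`
it satisfies `χ a (g b) = -χ b a`, i.e. `A * [g|_W] = -Aᵀ` for its Gram matrix `A`, whence
`det (g|_W) = (-1) ^ dim W`. Finally `g` acts trivially on `V ⧸ W`, so `det g = det (g|_W)`. -/

namespace LinearMap

variable {F V : Type*} [Field F] [AddCommGroup V] [Module F V] (g : V →ₗ[F] V)

theorem range_one_sub_le_comap : range (1 - g) ≤ (range (1 - g)).comap g := by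
  rintro _ ⟨y, rfl⟩
  exact ⟨g y, by simp⟩

theorem mapQ_range_one_sub_eq_id :
    (range (1 - g)).mapQ (range (1 - g)) g (range_one_sub_le_comap g) = LinearMap.id := by
  ext x
  simpa [Submodule.Quotient.eq] using ⟨-x, by simp [sub_eq_neg_add, add_comm]⟩

theorem det_eq_det_restrict_range_one_sub [FiniteDimensional F V] :
    LinearMap.det g = LinearMap.det (g.restrict (range_one_sub_le_comap g)) := by
  rw [det_eq_det_mul_det _ g (range_one_sub_le_comap g), mapQ_range_one_sub_eq_id, det_id,
    mul_one]

end LinearMap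

namespace LinearMap.BilinForm

open Module Matrix

theorem det_eq_neg_one_pow_finrank_of_compl₂_eq_neg_flip {F W : Type*} [Field F]
    [AddCommGroup W] [Module F W] [FiniteDimensional F W] {χ : LinearMap.BilinForm F W}
    (hχ : χ.SeparatingLeft) {T : W →ₗ[F] W} (hT : χ.compl₂ T = -χ.flip) :
    LinearMap.det T = (-1) ^ finrank F W := by
  let b := finBasis F W
  set A := toMatrix₂ b b χ
  have hA : A * LinearMap.toMatrix b b T = -Aᵀ := by
    rw [← toMatrix₂_compl₂, hT]
    ext i j
    simp [A, toMatrix₂_apply]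
  have hdet : A.det * LinearMap.det T = (-1) ^ finrank F W * A.det := by
    simpa [det_neg] using congrArg Matrix.det hA
  exact mul_left_cancel₀ ((separatingLeft_iff_det_ne_zero b).mp hχ) (hdet.trans (mul_comm _ _))

variable {F V : Type*} [Field F] [AddCommGroup V] [Module F V] {f : LinearMap.BilinForm F V}
  {g : V →ₗ[F] V}

theorem apply_one_sub_apply_isometry (hg : ∀ u v, f (g u) (g v) = f u v) (x y : V) :
    f ((1 - g) x) (g y) = -f x ((1 - g) y) := by
  simp only [LinearMap.sub_apply, End.one_apply, map_sub, hg]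
  ring

theorem apply_one_sub_eq_zero_of_mem_ker (hg : ∀ u v, f (g u) (g v) = f u v) (x : V)
    {z : V} (hz : z ∈ ker (1 - g)) : f ((1 - g) x) z = 0 := by
  have hgz : g z = z := (sub_eq_zero.mp (mem_ker.mp hz)).symm
  rw [← hgz, apply_one_sub_apply_isometry hg, mem_ker.mp hz, map_zero, neg_zero]

/-- Wall's form `(h x, h y) ↦ f (h x) y`, `h = 1 - g`, computed through an arbitrary linear section
of `h`. -/
noncomputable def wallForm (f : LinearMap.BilinForm F V) (g : V →ₗ[F] V) :
    LinearMap.BilinForm F (range (1 - g)) :=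
  f.compl₁₂ (range (1 - g)).subtype
    ((1 - g).rangeRestrict.exists_rightInverse_of_surjective (1 - g).range_rangeRestrict).choose

theorem wallForm_apply_rangeRestrict (hg : ∀ u v, f (g u) (g v) = f u v)
    (a : range (1 - g)) (y : V) : wallForm f g a ((1 - g).rangeRestrict y) = f a y := by
  obtain ⟨x, hx⟩ := a.2
  obtain hσ := ((1 - g).rangeRestrict.exists_rightInverse_of_surjective
    (1 - g).range_rangeRestrict).choose_spec
  set σ := ((1 - g).rangeRestrict.exists_rightInverse_of_surjective
    (1 - g).range_rangeRestrict).choose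
  have hker : σ ((1 - g).rangeRestrict y) - y ∈ ker (1 - g) := by
    rw [mem_ker, map_sub, sub_eq_zero]
    exact congrArg Subtype.val (LinearMap.congr_fun hσ ((1 - g).rangeRestrict y))
  have := apply_one_sub_eq_zero_of_mem_ker hg x hker
  rwa [hx, map_sub, sub_eq_zero] at this

theorem wallForm_compl₂_restrict (hsymm : ∀ u v, f u v = f v u)
    (hg : ∀ u v, f (g u) (g v) = f u v) :
    (wallForm f g).compl₂ (g.restrict (range_one_sub_le_comap g)) = -(wallForm f g).flip := by
  refine LinearMap.ext₂ fun a b => ?_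
  obtain ⟨x, rfl⟩ := (1 - g).surjective_rangeRestrict a
  obtain ⟨y, rfl⟩ := (1 - g).surjective_rangeRestrict b
  have hgy : g.restrict (range_one_sub_le_comap g) ((1 - g).rangeRestrict y) =
      (1 - g).rangeRestrict (g y) :=
    Subtype.ext (by simp)
  simp only [compl₂_apply, hgy, wallForm_apply_rangeRestrict hg, neg_apply, flip_apply,
    rangeRestrict, codRestrict_apply]
  rw [apply_one_sub_apply_isometry hg, hsymm]

theorem wallForm_separatingLeft (hsymm : ∀ u v, f u v = f v u)
    (hnd : ∀ v, (∀ u, f u v = 0) → v = 0) (hg : ∀ u v, f (g u) (g v) = f u v) :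
    (wallForm f g).SeparatingLeft := by
  intro a ha
  have hfa : ∀ y, f a y = 0 := fun y => by
    rw [← wallForm_apply_rangeRestrict hg]
    exact ha _
  exact Subtype.ext (hnd a fun u => by rw [hsymm]; exact hfa u)

end LinearMap.BilinForm

theorem det_eq_neg_one_pow_dickson_general
    (F : Type*) [Field F]
    (V : Type*) [AddCommGroup V] [Module F V] [FiniteDimensional F V]
    (f : LinearMap.BilinForm F V)
    (hsymm : ∀ u v, f u v = f v u)
    (hnd : ∀ v, (∀ u, f u v = 0) → v = 0)
    (g : V ≃ₗ[F] V) (hg : ∀ u v, f (g u) (g v) = f u v) :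
    LinearMap.det (g : V →ₗ[F] V) =
      (-1) ^ Module.finrank F
        (LinearMap.range ((1 : Module.End F V) - (g : Module.End F V))) := by
  rw [LinearMap.det_eq_det_restrict_range_one_sub]
  exact LinearMap.BilinForm.det_eq_neg_one_pow_finrank_of_compl₂_eq_neg_flip
    (LinearMap.BilinForm.wallForm_separatingLeft hsymm hnd hg)
    (LinearMap.BilinForm.wallForm_compl₂_restrict hsymm hg)

/-- In characteristic different from 2, the determinant of an
orthogonal transformation `g` equals `(−1)^{rank(Id − g)}`, so the determinant is
equivalent to the Dickson invariant. -/
theorem det_eq_neg_one_pow_dickson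
    (F : Type*) [Field F] (hchar : ringChar F ≠ 2)
    (V : Type*) [AddCommGroup V] [Module F V] [FiniteDimensional F V]
    (f : LinearMap.BilinForm F V)
    (hsymm : ∀ u v, f u v = f v u)
    (hnd : ∀ v, (∀ u, f u v = 0) → v = 0)
    (g : V ≃ₗ[F] V) (hg : ∀ u v, f (g u) (g v) = f u v) :
    LinearMap.det (g : V →ₗ[F] V) =
      (-1) ^ Module.finrank F
        (LinearMap.range ((1 : Module.End F V) - (g : Module.End F V))) :=
  det_eq_neg_one_pow_dickson_general F V f hsymm hnd g hg
end

section
/- Let F be a field of characteristic 2 and let a, b, a', b' ∈ F. If the binary quadratic forms Q(x,y) = a x² + xy + b y² and Q'(x,y) = a' x² + xy + b' y² on F² are equivalent (i.e., Q' = Q∘σ for some σ ∈ GL₂(F)), then ab + a'b' lies in the additive subgroup U := {u² + u | u ∈ F} of F. Hence the Arf invariant arf(a x² + xy + b y²) := ab + U ∈ F/U is well defined on equivalence classes. -/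
/-- In characteristic 2, if the binary quadratic forms
`a x² + xy + b y²` and `a' x² + xy + b' y²` on `F²` are equivalent under
`GL₂(F)`, then `ab + a'b'` lies in the Artin–Schreier subgroup
`U = {u² + u | u ∈ F}`; hence the Arf invariant is well defined. -/
theorem arf_invariant_well_defined
    (F : Type*) [Field F] [CharP F 2] (a b a' b' : F)
    (σ : (F × F) ≃ₗ[F] (F × F))
    (h : ∀ w : F × F,
      a' * w.1 ^ 2 + w.1 * w.2 + b' * w.2 ^ 2 =
        a * (σ w).1 ^ 2 + (σ w).1 * (σ w).2 + b * (σ w).2 ^ 2) :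
    ∃ u : F, a * b + a' * b' = u ^ 2 + u := by
  have h2 : (2 : F) = 0 := by
    have := CharP.cast_eq_zero F 2
    simpa using this
  set p := (σ (1, 0)).1 with hp
  set r := (σ (1, 0)).2 with hr
  set q := (σ (0, 1)).1 with hq
  set s := (σ (0, 1)).2 with hs
  have hsum : σ (1, 1) = (p + q, r + s) := by
    have h11 : ((1, 1) : F × F) = (1, 0) + (0, 1) := by
      simp [Prod.ext_iff]
    rw [h11, map_add]
    rw [hp, hq, hr, hs]
    exact Prod.ext rfl rfl
  have e1 := h (1, 0)
  have e2 := h (0, 1)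
  have e3 := h (1, 1)
  rw [hsum] at e3
  simp only [← hp, ← hq, ← hr, ← hs] at e1 e2
  norm_num at e1 e2 e3
  -- e1 : a' = a * p ^ 2 + p * r + b * r ^ 2
  -- e2 : b' = a * q ^ 2 + q * s + b * s ^ 2
  have hps : p * s + q * r = 1 := by
    linear_combination e3 - e1 - e2 + (a * p * q + b * r * s + p * s + q * r - 1) * h2
  refine ⟨a * p * q + b * r * s + q * r, ?_⟩
  linear_combination b' * e1 + (a * p ^ 2 + p * r + b * r ^ 2) * e2
    + (q * r + b * r * s + a * p * q - a * b + a * b * q * r + a * b * p * s) * hps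
    + (-(q ^ 2 * r ^ 2) - b * q * r ^ 2 * s - a * p * q ^ 2 * r + a * b * q * r
        + a * b * p * s - 2 * a * b * p * q * r * s) * h2
end
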